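/- Let Γ be a real M×K matrix such that Γᵀ·Γ is invertible, let Λ, Λ̂, A be real K×K matrices, and let Ĝ be a real M×K matrix. Then ‖Λ − Λ̂‖_F ≤ ‖(ΓᵀΓ)⁻¹Γᵀ‖_F · ‖Γ·Λ − Ĝ·Λ̂‖_F + ‖Λ̂‖_F · ( ‖(ΓᵀΓ)⁻¹Γᵀ‖_F · ‖Ĝ − Γ·A‖_F + ‖A − I_K‖_F ). -/

import Mathlib

open Matrix Finset

/-- The Frobenius norm of a real matrix. -/
noncomputable def frobeniusNorm' {m n : Type*} [Fintype m] [Fintype n]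
    (A : Matrix m n ℝ) : ℝ :=
  Real.sqrt (∑ i, ∑ j, (A i j) ^ 2)

attribute [local instance] Matrix.frobeniusSeminormedAddCommGroup

lemma frobeniusNorm'_eq_norm {m n : Type*} [Fintype m] [Fintype n] (A : Matrix m n ℝ) :
    frobeniusNorm' A = ‖A‖ := by
  simp only [frobeniusNorm', frobenius_norm_def, Real.norm_eq_abs, Real.sqrt_eq_rpow]
  norm_cast
  simp only [sq_abs]

namespace Matrix

variable {m n R : Type*} [Fintype m] [Fintype n] [DecidableEq n]

lemma sub_eq_mul_add_mul_of_mul_eq_one [Ring R] {P : Matrix n m R} {Γ G : Matrix m n R}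
    (hPΓ : P * Γ = 1) (Λ Λ' A : Matrix n n R) :
    Λ - Λ' = P * (Γ * Λ - G * Λ') + (P * (G - Γ * A) + (A - 1)) * Λ' := by
  simp only [Matrix.mul_sub, Matrix.sub_mul, Matrix.add_mul, ← Matrix.mul_assoc, hPΓ,
    Matrix.one_mul]
  abel

lemma frobenius_norm_sub_le_of_mul_eq_one {𝕜 : Type*} [RCLike 𝕜] {P : Matrix n m 𝕜}
    {Γ G : Matrix m n 𝕜} (hPΓ : P * Γ = 1) (Λ Λ' A : Matrix n n 𝕜) :
    ‖Λ - Λ'‖ ≤ ‖P‖ * ‖Γ * Λ - G * Λ'‖ + ‖Λ'‖ * (‖P‖ * ‖G - Γ * A‖ + ‖A - 1‖) :=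
  calc ‖Λ - Λ'‖
      = ‖P * (Γ * Λ - G * Λ') + (P * (G - Γ * A) + (A - 1)) * Λ'‖ := by
        rw [← sub_eq_mul_add_mul_of_mul_eq_one hPΓ]
    _ ≤ ‖P‖ * ‖Γ * Λ - G * Λ'‖ + (‖P‖ * ‖G - Γ * A‖ + ‖A - 1‖) * ‖Λ'‖ := by
        grw [norm_add_le, frobenius_norm_mul, frobenius_norm_mul, norm_add_le,
          frobenius_norm_mul]
    _ = _ := by ring

end Matrix

theorem nmf_step5_bound_general
    (M K : ℕ)
    (Γ Ghat : Matrix (Fin M) (Fin K) ℝ)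
    (Λ Λhat A : Matrix (Fin K) (Fin K) ℝ)
    (hΓ : IsUnit (Γᵀ * Γ)) :
    frobeniusNorm' (Λ - Λhat)
      ≤ frobeniusNorm' ((Γᵀ * Γ)⁻¹ * Γᵀ) * frobeniusNorm' (Γ * Λ - Ghat * Λhat)
        + frobeniusNorm' Λhat
          * (frobeniusNorm' ((Γᵀ * Γ)⁻¹ * Γᵀ) * frobeniusNorm' (Ghat - Γ * A)
              + frobeniusNorm' (A - 1)) := by
  have hleft : (Γᵀ * Γ)⁻¹ * Γᵀ * Γ = 1 := by
    rw [Matrix.mul_assoc, nonsing_inv_mul _ ((isUnit_iff_isUnit_det _).mp hΓ)]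
  simpa only [frobeniusNorm'_eq_norm] using
    frobenius_norm_sub_le_of_mul_eq_one hleft Λ Λhat A

/-- the final deterministic inequality (Step 5) in the consistency
proof, bounding `‖Λ − Λ̂‖_F` by the closeness of the factor products, of `Ĝ` to
`Γ·A`, and of `A` to the identity. -/
theorem nmf_step5_bound
    (M K : ℕ) (hM : 0 < M) (hK : 0 < K)
    (Γ Ghat : Matrix (Fin M) (Fin K) ℝ)
    (Λ Λhat A : Matrix (Fin K) (Fin K) ℝ)
    (hΓ : IsUnit (Γᵀ * Γ)) :
    frobeniusNorm' (Λ - Λhat)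
      ≤ frobeniusNorm' ((Γᵀ * Γ)⁻¹ * Γᵀ) * frobeniusNorm' (Γ * Λ - Ghat * Λhat)
        + frobeniusNorm' Λhat
          * (frobeniusNorm' ((Γᵀ * Γ)⁻¹ * Γᵀ) * frobeniusNorm' (Ghat - Γ * A)
              + frobeniusNorm' (A - 1)) :=
  nmf_step5_bound_general M K Γ Ghat Λ Λhat A hΓ
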